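/- arXiv:2011.05500 — 5 statements merged into one kernel-verified Lean document; each statement's English description precedes it below -/
import Mathlib

section
/- Let C ⊆ F_2^n be a linear code and W(k) ⊆ [n]^k a (1/2 + ε_0/2, ε)-parity sampler with ε_0, ε ∈ (0,1). Let C' = dsum_W(C). Suppose ỹ ∈ F_2^{W(k)} and z̃ ∈ F_2^n satisfy Δ(dsum_W(z̃), ỹ) < (1-ε)/4 + δ, and z ∈ C satisfies Δ(dsum_W(z), ỹ) < (1-ε)/4 - δ for some δ ≥ 0. Then either Δ(z, z̃) < (1-ε_0)/4 or Δ(z, complement of z̃) < (1-ε_0)/4. -/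
/-- The bias of a word `z ∈ F_2^n`. -/
noncomputable def bias (n : ℕ) (z : Fin n → ZMod 2) : ℝ :=
  |(∑ i, (-1 : ℝ) ^ (z i).val) / n|

/-- The direct sum lifting. -/
def dsum {n k : ℕ} (W : Finset (Fin k → Fin n)) (z : Fin n → ZMod 2) :
    {w // w ∈ W} → ZMod 2 :=
  fun w => ∑ i, z (w.1 i)

/-- Bias of a lifted word. -/
noncomputable def biasW {n k : ℕ} (W : Finset (Fin k → Fin n))
    (y : {w // w ∈ W} → ZMod 2) : ℝ :=
  |(∑ w : {w // w ∈ W}, (-1 : ℝ) ^ (y w).val) / W.card|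

/-- Normalized Hamming distance on `F_2^n`. -/
noncomputable def hdist {n : ℕ} (x y : Fin n → ZMod 2) : ℝ :=
  ((Finset.univ.filter fun i => x i ≠ y i).card : ℝ) / n

/-- Normalized Hamming distance on `F_2^{W(k)}`. -/
noncomputable def hdistW {n k : ℕ} (W : Finset (Fin k → Fin n))
    (x y : {w // w ∈ W} → ZMod 2) : ℝ :=
  ((Finset.univ.filter fun w => x w ≠ y w).card : ℝ) / W.card

/-!
If `z` were far from both `zt` and its complement, the relative weight of `z + zt` would lie in
`[(1-ε₀)/4, (3+ε₀)/4]`, so `z + zt` would have bias at most `1/2 + ε₀/2`. The parity sampler then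
bounds the bias of its lift by `ε`, i.e. the lifts of `z` and `zt` are at distance at least
`(1-ε)/2`. But both lifts are close to `yt`, and the triangle inequality puts them at distance
less than `((1-ε)/4 + δ) + ((1-ε)/4 - δ) = (1-ε)/2`.
-/

open Finset

section ZModTwoWords

variable {α : Type*} [Fintype α]

lemma ZMod.neg_one_pow_val_two (a : ZMod 2) :
    (-1 : ℝ) ^ a.val = 1 - 2 * if a ≠ 0 then 1 else 0 := by
  rcases (show ∀ b : ZMod 2, b = 0 ∨ b = 1 by decide) a with rfl | rfl <;> norm_num [ZMod.val_one]

lemma sum_neg_one_pow_val_eq (z : α → ZMod 2) :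
    ∑ i, (-1 : ℝ) ^ (z i).val = Fintype.card α - 2 * hammingNorm z := by
  simp only [ZMod.neg_one_pow_val_two, sum_sub_distrib, ← mul_sum, sum_boole, sum_const,
    card_univ, nsmul_eq_mul, mul_one, hammingNorm]

lemma abs_sum_neg_one_pow_val_div_card (hα : 0 < Fintype.card α) (z : α → ZMod 2) :
    |(∑ i, (-1 : ℝ) ^ (z i).val) / Fintype.card α| =
      |1 - 2 * (hammingNorm z / Fintype.card α : ℝ)| := by
  have : (Fintype.card α : ℝ) ≠ 0 := by positivity
  rw [sum_neg_one_pow_val_eq]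
  field_simp

lemma hammingDist_eq_hammingNorm_add (x y : α → ZMod 2) :
    hammingDist x y = hammingNorm (x + y) := by
  rw [hammingDist_eq_hammingNorm, ZModModule.neg_eq_self]

lemma hammingDist_add_hammingDist_add_one (x y : α → ZMod 2) :
    hammingDist x y + hammingDist x (y + fun _ => 1) = Fintype.card α := by
  have hsplit : ∀ a b : ZMod 2, a ≠ b + 1 ↔ ¬ a ≠ b := by decide
  simp only [hammingDist, Pi.add_apply, hsplit]
  exact card_filter_add_card_filter_not (fun i => x i ≠ y i)

end ZModTwoWords

lemma bias_eq {n : ℕ} (hn : 0 < n) (u : Fin n → ZMod 2) :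
    bias n u = |1 - 2 * (hammingNorm u / n : ℝ)| := by
  simpa only [bias, Fintype.card_fin] using abs_sum_neg_one_pow_val_div_card (by simpa using hn) u

lemma biasW_eq {n k : ℕ} {W : Finset (Fin k → Fin n)} (hW : W.Nonempty)
    (y : {w // w ∈ W} → ZMod 2) :
    biasW W y = |1 - 2 * (hammingNorm y / W.card : ℝ)| := by
  simpa only [biasW, Fintype.card_coe] using abs_sum_neg_one_pow_val_div_card (by simpa using hW) y

lemma hdist_eq {n : ℕ} (x y : Fin n → ZMod 2) : hdist x y = hammingDist x y / n := rfl

lemma hdist_add_hdist_add_one {n : ℕ} (hn : 0 < n) (x y : Fin n → ZMod 2) :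
    hdist x y + hdist x (y + fun _ => 1) = 1 := by
  have : (n : ℝ) ≠ 0 := by positivity
  rw [hdist_eq, hdist_eq, ← add_div, ← Nat.cast_add, hammingDist_add_hammingDist_add_one]
  simp [this]

lemma hdistW_eq {n k : ℕ} (W : Finset (Fin k → Fin n)) (x y : {w // w ∈ W} → ZMod 2) :
    hdistW W x y = hammingDist x y / W.card := rfl

lemma hdistW_comm {n k : ℕ} (W : Finset (Fin k → Fin n)) (x y : {w // w ∈ W} → ZMod 2) :
    hdistW W x y = hdistW W y x := by
  rw [hdistW_eq, hdistW_eq, hammingDist_comm]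

lemma hdistW_triangle {n k : ℕ} (W : Finset (Fin k → Fin n)) (x y z : {w // w ∈ W} → ZMod 2) :
    hdistW W x z ≤ hdistW W x y + hdistW W y z := by
  simp only [hdistW_eq, ← add_div]
  gcongr
  exact_mod_cast hammingDist_triangle x y z

lemma dsum_add {n k : ℕ} (W : Finset (Fin k → Fin n)) (x y : Fin n → ZMod 2) :
    dsum W (x + y) = dsum W x + dsum W y := by
  ext w
  simp [dsum, sum_add_distrib]

theorem stmt_2_general {n k : ℕ} (hn : 0 < n) (ε₀ ε δ : ℝ)
    (W : Finset (Fin k → Fin n)) (hW : W.Nonempty)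
    (hps : ∀ u : Fin n → ZMod 2, bias n u ≤ 1/2 + ε₀/2 → biasW W (dsum W u) ≤ ε)
    (yt : {w // w ∈ W} → ZMod 2) (zt z : Fin n → ZMod 2)
    (h1 : hdistW W (dsum W zt) yt < (1 - ε)/4 + δ)
    (h2 : hdistW W (dsum W z) yt < (1 - ε)/4 - δ) :
    hdist z zt < (1 - ε₀)/4 ∨ hdist z (zt + fun _ => 1) < (1 - ε₀)/4 := by
  by_contra! hfar
  obtain ⟨hfar, hfar_compl⟩ := hfar
  have hlift_close : hdistW W (dsum W z) (dsum W zt) < (1 - ε)/2 := by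
    have := hdistW_triangle W (dsum W z) yt (dsum W zt)
    rw [hdistW_comm W yt] at this
    linarith
  have hbias : bias n (z + zt) ≤ 1/2 + ε₀/2 := by
    have := hdist_add_hdist_add_one hn z zt
    rw [bias_eq hn, ← hammingDist_eq_hammingNorm_add, ← hdist_eq, abs_le]
    constructor <;> linarith
  have hbiasW : ε < biasW W (dsum W (z + zt)) := by
    rw [hdistW_eq] at hlift_close
    rw [biasW_eq hW, dsum_add, ← hammingDist_eq_hammingNorm_add]
    exact lt_abs.mpr (Or.inl (by linarith))
  exact (hps _ hbias).not_gt hbiasW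

/-- If `W(k)` is a `(1/2 + ε₀/2, ε)`-parity sampler, `yt` is within `(1-ε)/4 + δ` of the lift
of `zt` and `z ∈ C` has its lift within `(1-ε)/4 - δ` of `yt`, then `z` is within distance
`(1-ε₀)/4` of `zt` or of its complement. -/
theorem stmt_2 {n k : ℕ} (hn : 0 < n) (ε₀ ε δ : ℝ)
    (hε₀ : ε₀ ∈ Set.Ioo (0 : ℝ) 1) (hε : ε ∈ Set.Ioo (0 : ℝ) 1) (hδ : 0 ≤ δ)
    (W : Finset (Fin k → Fin n)) (hW : W.Nonempty)
    (hps : ∀ u : Fin n → ZMod 2, bias n u ≤ 1/2 + ε₀/2 → biasW W (dsum W u) ≤ ε)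
    (C : Submodule (ZMod 2) (Fin n → ZMod 2))
    (yt : {w // w ∈ W} → ZMod 2) (zt z : Fin n → ZMod 2) (hzC : z ∈ C)
    (h1 : hdistW W (dsum W zt) yt < (1 - ε)/4 + δ)
    (h2 : hdistW W (dsum W z) yt < (1 - ε)/4 - δ) :
    hdist z zt < (1 - ε₀)/4 ∨ hdist z (zt + fun _ => 1) < (1 - ε₀)/4 :=
  stmt_2_general hn ε₀ ε δ W hW hps yt zt z h1 h2
end

section
/- Let G be a regular graph with normalized Laplacian second eigenvalue λ_2(L_G) ≥ 1 − β/2 (equivalently second adjacency eigenvalue at most β/2), and let v_1, ..., v_n ∈ R^n be vectors in the unit ball. If E_{i∼j}⟨v_i, v_j⟩ ≥ β (expectation over a uniformly random edge), then E_{i,j∼V}⟨v_i, v_j⟩ ≥ β/2 (expectation over two independent uniform vertices). -/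
lemma stmt_10_div1 (x y c : ℝ) (hc : c ≠ 0) :
    (2*c*x - 2*y)/(c*c) = 2*(x/c) - 2*(y/(c*c)) := by
  field_simp

lemma stmt_10_div2 (x y c e : ℝ) (hc : c ≠ 0) (he : e ≠ 0) :
    (2*e*x - 2*y)/(c*e) = 2*(x/c) - 2*(y/(c*e)) := by
  field_simp

lemma stmt_10_aux (β t a w : ℝ) (h : (1 - β/2) * (2*t - 2*a) ≤ 2*t - 2*w)
    (hw : β ≤ w) (ht : t ≤ 1) (ha : 0 ≤ a) (hβ : β ≤ 1) : β / 2 ≤ a := by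
  rcases le_or_gt β 0 with hb | hb
  · linarith
  · nlinarith [mul_nonneg hb.le (sub_nonneg.2 ht), mul_pos hb hb, mul_nonneg hb.le ha]


set_option maxHeartbeats 1000000 in
/-- Local-to-global correlation on an expander: if the normalized Laplacian of a `d`-regular
graph `G` has second eigenvalue at least `1 - β/2` (expressed via the variational
characterization), and `v₁, …, vₙ` are vectors in the unit ball with average correlation at
least `β` over the edges, then the average correlation over two independent uniform vertices
is at least `β/2`. -/
theorem stmt_10 (n d : ℕ) (hn : 0 < n) (hd : 0 < d) (β : ℝ)
    (G : SimpleGraph (Fin n)) [DecidableRel G.Adj] (hreg : G.IsRegularOfDegree d)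
    (v : Fin n → Fin n → ℝ) (hv : ∀ i, Real.sqrt (∑ l, v i l ^ 2) ≤ 1)
    (hgap : ∀ u : Fin n → Fin n → ℝ,
      (1 - β/2) * ((∑ i, ∑ j, ∑ l, (u i l - u j l) ^ 2) / (n * n)) ≤
        (∑ i, ∑ j, if G.Adj i j then ∑ l, (u i l - u j l) ^ 2 else 0) / (n * d))
    (hcorr : β ≤ (∑ i, ∑ j, if G.Adj i j then ∑ l, v i l * v j l else 0) / (n * d)) :
    β / 2 ≤ (∑ i, ∑ j, ∑ l, v i l * v j l) / (n * n) := by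
  have hv' : ∀ i, (∑ l, v i l ^ 2) ≤ 1 := by
    intro i
    have h2 : (0:ℝ) ≤ ∑ l, v i l ^ 2 := by positivity
    nlinarith [hv i, Real.sq_sqrt h2, Real.sqrt_nonneg (∑ l, v i l ^ 2)]
  set T : ℝ := ∑ i, ∑ l, v i l ^ 2 with hTdef
  set P : ℝ := ∑ i, ∑ j, ∑ l, v i l * v j l with hPdef
  set W : ℝ := ∑ i, ∑ j, if G.Adj i j then ∑ l, v i l * v j l else 0 with hWdef
  have hnn : (0:ℝ) < n := by exact_mod_cast hn
  have hdd : (0:ℝ) < d := by exact_mod_cast hd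
  have hdeg : ∀ (i : Fin n) (c : ℝ), ∑ j, (if G.Adj i j then c else 0) = d * c := by
    intro i c
    rw [← Finset.sum_filter, Finset.sum_const]
    have : (Finset.univ.filter (G.Adj i)).card = d := by
      rw [← SimpleGraph.neighborFinset_eq_filter]
      exact hreg i
    rw [this, nsmul_eq_mul]
  have hT0 : (0:ℝ) ≤ T := by positivity
  have hTn : T ≤ n := by
    calc T ≤ ∑ _i : Fin n, (1:ℝ) := Finset.sum_le_sum fun i _ => hv' i
    _ = n := by simp
  have hP0 : (0:ℝ) ≤ P := by
    have h : P = ∑ l, (∑ i, v i l)^2 := by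
      rw [hPdef]
      have h1 : ∀ i : Fin n, ∑ j, ∑ l, v i l * v j l = ∑ l, v i l * ∑ j, v j l := by
        intro i
        rw [Finset.sum_comm]
        exact Finset.sum_congr rfl fun l _ => (Finset.mul_sum _ _ _).symm
      rw [Finset.sum_congr rfl fun i _ => h1 i, Finset.sum_comm]
      exact Finset.sum_congr rfl fun l _ => by rw [sq, ← Finset.sum_mul]
    rw [h]; positivity
  have hWnd : W ≤ n * d := by
    have hterm : ∀ i j : Fin n, (if G.Adj i j then ∑ l, v i l * v j l else 0) ≤
        (if G.Adj i j then (1:ℝ) else 0) := by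
      intro i j
      split
      · have h1 := Finset.sum_mul_sq_le_sq_mul_sq Finset.univ (v i) (v j)
        have h2 : (0:ℝ) ≤ ∑ l, v i l ^ 2 := by positivity
        have h3 : (0:ℝ) ≤ ∑ l, v j l ^ 2 := by positivity
        nlinarith [hv' i, hv' j]
      · exact le_refl _
    calc W ≤ ∑ i : Fin n, ∑ j : Fin n, (if G.Adj i j then (1:ℝ) else 0) :=
          Finset.sum_le_sum fun i _ => Finset.sum_le_sum fun j _ => hterm i j
    _ = ∑ _i : Fin n, (d:ℝ) * 1 := Finset.sum_congr rfl fun i _ => hdeg i 1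
    _ = n * d := by simp [mul_comm]
  have hexp : ∀ i j : Fin n, (∑ l, (v i l - v j l)^2)
      = (∑ l, v i l ^ 2) + (∑ l, v j l ^ 2) - 2 * ∑ l, v i l * v j l := by
    intro i j
    have h1 : ∀ l : Fin n, (v i l - v j l)^2 = v i l ^ 2 + v j l ^ 2 - 2 * (v i l * v j l) :=
      fun l => by ring
    simp only [h1, Finset.sum_sub_distrib, Finset.sum_add_distrib, ← Finset.mul_sum]
  have hQ : (∑ i, ∑ j, ∑ l, (v i l - v j l)^2) = 2 * n * T - 2 * P := by
    have h1 : ∀ i : Fin n, ∑ j, ∑ l, (v i l - v j l)^2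
        = (n:ℝ) * (∑ l, v i l ^ 2) + T - 2 * ∑ j, ∑ l, v i l * v j l := by
      intro i
      simp only [hexp i, Finset.sum_sub_distrib, Finset.sum_add_distrib, Finset.sum_const,
        ← Finset.mul_sum, nsmul_eq_mul, Finset.card_univ, Fintype.card_fin]
      rfl
    rw [Finset.sum_congr rfl fun i _ => h1 i]
    simp only [Finset.sum_sub_distrib, Finset.sum_add_distrib, Finset.sum_const,
      ← Finset.mul_sum, nsmul_eq_mul, Finset.card_univ, Fintype.card_fin]
    rw [← hTdef, ← hPdef]
    ring
  have hDedge : (∑ i, ∑ j, if G.Adj i j then ∑ l, (v i l - v j l)^2 else 0)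
      = 2 * d * T - 2 * W := by
    have h1 : ∀ i j : Fin n, (if G.Adj i j then ∑ l, (v i l - v j l)^2 else 0)
        = (if G.Adj i j then (∑ l, v i l ^ 2) else 0)
          + (if G.Adj i j then (∑ l, v j l ^ 2) else 0)
          - 2 * (if G.Adj i j then ∑ l, v i l * v j l else 0) := by
      intro i j
      by_cases h : G.Adj i j <;> simp [h, hexp i j] <;> ring
    have h3 : (∑ i, ∑ j, if G.Adj i j then (∑ l, v j l ^ 2) else 0) = (d:ℝ) * T := by
      rw [Finset.sum_comm]
      have h4 : ∀ j : Fin n, (∑ i, if G.Adj i j then (∑ l, v j l ^ 2) else 0)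
          = (d:ℝ) * (∑ l, v j l ^ 2) := by
        intro j
        have h5 : ∀ i : Fin n, (if G.Adj i j then (∑ l, v j l ^ 2) else 0)
            = (if G.Adj j i then (∑ l, v j l ^ 2) else 0) := by
          intro i; exact if_congr (G.adj_comm i j) rfl rfl
        rw [Finset.sum_congr rfl fun i _ => h5 i, hdeg j]
      rw [Finset.sum_congr rfl fun j _ => h4 j, ← Finset.mul_sum, ← hTdef]
    have h2 : ∀ i : Fin n, ∑ j, ((if G.Adj i j then (∑ l, v i l ^ 2) else 0)
          + (if G.Adj i j then (∑ l, v j l ^ 2) else 0)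
          - 2 * (if G.Adj i j then ∑ l, v i l * v j l else 0))
        = (d:ℝ) * (∑ l, v i l ^ 2) + (∑ j, if G.Adj i j then (∑ l, v j l ^ 2) else 0)
          - 2 * (∑ j, if G.Adj i j then ∑ l, v i l * v j l else 0) := by
      intro i
      rw [Finset.sum_sub_distrib, Finset.sum_add_distrib, hdeg i, ← Finset.mul_sum]
    rw [Finset.sum_congr rfl fun i _ => Finset.sum_congr rfl fun j _ => h1 i j]
    rw [Finset.sum_congr rfl fun i _ => h2 i]
    rw [Finset.sum_sub_distrib, Finset.sum_add_distrib, ← Finset.mul_sum, ← Finset.mul_sum,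
      h3, ← hTdef, ← hWdef]
    ring
  have hgapv := hgap v
  rw [hQ, hDedge] at hgapv
  have hn0 : (n:ℝ) ≠ 0 := hnn.ne'
  have hd0 : (d:ℝ) ≠ 0 := hdd.ne'
  have hβ1 : β ≤ 1 := by
    have h : W / (n * d) ≤ 1 := by
      rw [div_le_one (by positivity)]; exact hWnd
    linarith [hcorr, h]
  have e1 : (2 * (n:ℝ) * T - 2 * P) / (n * n) = 2 * (T / n) - 2 * (P / (n * n)) :=
    stmt_10_div1 T P _ hn0
  have e2 : (2 * (d:ℝ) * T - 2 * W) / (n * d) = 2 * (T / n) - 2 * (W / (n * d)) :=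
    stmt_10_div2 T W _ _ hn0 hd0
  rw [e1, e2] at hgapv
  have ht1 : T / (n:ℝ) ≤ 1 := by rw [div_le_one hnn]; exact hTn
  have ha0 : (0:ℝ) ≤ P / (n * n) := div_nonneg hP0 (by positivity)
  exact stmt_10_aux β (T / n) (P / (n * n)) (W / (n * d)) hgapv hcorr ht1 ha0 hβ1
end

section
/- Let G be a λ_1-two-sided spectral expander and H a λ_2-two-sided spectral expander, both regular graphs, with λ_1 ≤ λ_2 ≤ 1. Then the zig-zag product G ⓩ H, with walk operator (I ⊗ A_H) G̃ (I ⊗ A_H) where G̃ is a permutation operator, satisfies σ_2(G ⓩ H) ≤ 2λ_2. -/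
/-!
Write `v = s + t` with `s` the cloud averages of `v` and `t` summing to zero on every cloud.
A contraction fixing `s` satisfies `⟪s, M f⟫ = ⟪s, f⟫`, so with `z = G̃ M v` and `w` its
cloud-balanced part the quadratic form splits as `⟪s, G̃ s⟫ + ⟪s, G̃ M t⟫ + ⟪t, M w⟫`.
With `a = ‖s‖`, `b = ‖t‖` the three terms are at most `λ₁ a²`, `λ₂ a b` and
`λ₂ b (a + λ₂ b)`, and `λ₁ a² + 2 λ₂ a b + λ₂² b² ≤ 2 λ₂ (a² + b²) = 2 λ₂ ‖v‖²`.
-/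

noncomputable def en {ι : Type*} [Fintype ι] (f : ι → ℝ) : ℝ :=
  Real.sqrt (∑ i, f i ^ 2)

def ip {ι : Type*} [Fintype ι] (f g : ι → ℝ) : ℝ := ∑ i, f i * g i

lemma eq_zero_of_forall_two_mul_le_sq_mul {c K : ℝ} (h : ∀ ε : ℝ, 2 * ε * c ≤ ε ^ 2 * K) :
    c = 0 := by
  by_contra hc
  have hK : 0 ≤ K := by nlinarith [h 1, h (-1)]
  have hε := h (c / (K + 1))
  rw [div_pow, show 2 * (c / (K + 1)) * c = 2 * (K + 1) * c ^ 2 / (K + 1) ^ 2 by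
    field_simp, div_mul_eq_mul_div, div_le_div_iff_of_pos_right (by positivity)] at hε
  nlinarith [pow_pos (abs_pos.2 hc) 2, sq_abs c]

open RealInnerProductSpace in
lemma real_inner_map_eq_of_norm_map_le {F : Type*} [NormedAddCommGroup F] [InnerProductSpace ℝ F]
    (T : F →ₗ[ℝ] F) (hT : ∀ x, ‖T x‖ ≤ ‖x‖) {y : F} (hy : T y = y) (x : F) :
    ⟪y, T x⟫ = ⟪y, x⟫ := by
  suffices ⟪y, T x⟫ - ⟪y, x⟫ = 0 by linarith
  -- expand `‖T (y + ε • x)‖ ^ 2 ≤ ‖y + ε • x‖ ^ 2`, where `T (y + ε • x) = y + ε • T x`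
  refine eq_zero_of_forall_two_mul_le_sq_mul (K := ‖x‖ ^ 2 - ‖T x‖ ^ 2) fun ε => ?_
  have h := pow_le_pow_left₀ (norm_nonneg _) (hT (y + ε • x)) 2
  rw [map_add, map_smul, hy, norm_add_sq_real, norm_add_sq_real, inner_smul_right,
    inner_smul_right, norm_smul, norm_smul, Real.norm_eq_abs, mul_pow, mul_pow, sq_abs] at h
  linarith

section EuclideanNorm

open RealInnerProductSpace

variable {ι : Type*} [Fintype ι]

lemma en_eq_norm (f : ι → ℝ) : en f = ‖WithLp.toLp 2 f‖ := by
  simp [en, EuclideanSpace.norm_eq]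

lemma ip_eq_inner (f g : ι → ℝ) : ip f g = ⟪WithLp.toLp 2 f, WithLp.toLp 2 g⟫ := by
  simp [ip, PiLp.inner_apply, mul_comm]

lemma en_nonneg (f : ι → ℝ) : 0 ≤ en f := Real.sqrt_nonneg _

lemma ip_comm (f g : ι → ℝ) : ip f g = ip g f := by
  simp only [ip, mul_comm]

lemma ip_add_left (f g h : ι → ℝ) : ip (f + g) h = ip f h + ip g h := by
  simp [ip, add_mul, Finset.sum_add_distrib]

lemma ip_add_right (f g h : ι → ℝ) : ip f (g + h) = ip f g + ip f h := by
  simp [ip, mul_add, Finset.sum_add_distrib]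

lemma abs_ip_le (f g : ι → ℝ) : |ip f g| ≤ en f * en g := by
  simpa only [ip_eq_inner, en_eq_norm] using abs_real_inner_le_norm _ _

lemma en_add_le (f g : ι → ℝ) : en (f + g) ≤ en f + en g := by
  simpa only [en_eq_norm, WithLp.toLp_add] using norm_add_le _ _

lemma en_add_sq_of_ip_eq_zero {f g : ι → ℝ} (h : ip f g = 0) :
    en (f + g) ^ 2 = en f ^ 2 + en g ^ 2 := by
  rw [ip_eq_inner] at h
  simp only [en_eq_norm, WithLp.toLp_add, norm_add_sq_real, h]
  ring

lemma ip_map_eq_of_en_map_le (T : (ι → ℝ) →ₗ[ℝ] (ι → ℝ)) (hT : ∀ f, en (T f) ≤ en f)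
    {y : ι → ℝ} (hy : T y = y) (f : ι → ℝ) : ip y (T f) = ip y f := by
  let T' := (WithLp.linearEquiv 2 ℝ (ι → ℝ)).symm.conj T
  have hT' : ∀ f, T' (WithLp.toLp 2 f) = WithLp.toLp 2 (T f) := fun f => rfl
  simpa only [ip_eq_inner, hT'] using real_inner_map_eq_of_norm_map_le T'
    (fun x => by simpa only [en_eq_norm, hT'] using hT x.ofLp) (by rw [hT', hy]) (WithLp.toLp 2 f)

end EuclideanNorm

lemma zigzag_quadratic_le {l1 l2 : ℝ} (a b : ℝ) (h12 : l1 ≤ l2) (hl2 : 0 ≤ l2) (h2 : l2 ≤ 1) :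
    l1 * a ^ 2 + 2 * l2 * a * b + l2 ^ 2 * b ^ 2 ≤ 2 * l2 * (a ^ 2 + b ^ 2) := by
  nlinarith [mul_nonneg hl2 (sq_nonneg (a - b)), mul_nonneg (sub_nonneg.2 h12) (sq_nonneg a),
    mul_nonneg (mul_nonneg hl2 (sub_nonneg.2 h2)) (sq_nonneg b)]

section Clouds

variable {VG VH : Type*} [Fintype VH]

def IsCloudBalanced (w : VG × VH → ℝ) : Prop := ∀ a, ∑ h, w (a, h) = 0

noncomputable def cloudMean (v : VG × VH → ℝ) (a : VG) : ℝ :=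
  (∑ h, v (a, h)) / Fintype.card VH

noncomputable def cloudProj (v : VG × VH → ℝ) : VG × VH → ℝ := fun p => cloudMean v p.1

lemma isCloudBalanced_sub_cloudProj (v : VG × VH → ℝ) : IsCloudBalanced (v - cloudProj v) := by
  intro a
  rcases isEmpty_or_nonempty VH with hVH | hVH
  · simp
  · simp [cloudProj, cloudMean, Finset.sum_sub_distrib, Finset.card_univ, mul_div_cancel₀]

variable [Fintype VG]

lemma ip_cloudProj_eq_zero (v : VG × VH → ℝ) {w : VG × VH → ℝ}
    (hw : IsCloudBalanced w) : ip (cloudProj v) w = 0 := by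
  simp [ip, cloudProj, Fintype.sum_prod_type, ← Finset.mul_sum, hw _]

lemma sum_cloudMean_eq_zero {v : VG × VH → ℝ} (hv : ip v (fun _ => 1) = 0) :
    ∑ a, cloudMean v a = 0 := by
  simp_all [ip, cloudMean, ← Finset.sum_div, ← Fintype.sum_prod_type']

lemma en_sq_eq_cloudProj_add (v : VG × VH → ℝ) :
    en v ^ 2 = en (cloudProj v) ^ 2 + en (v - cloudProj v) ^ 2 := by
  rw [← en_add_sq_of_ip_eq_zero (ip_cloudProj_eq_zero v (isCloudBalanced_sub_cloudProj v)),
    add_sub_cancel]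

lemma en_sub_cloudProj_le (v : VG × VH → ℝ) : en (v - cloudProj v) ≤ en v := by
  refine le_of_sq_le_sq ?_ (en_nonneg v)
  nlinarith [en_sq_eq_cloudProj_add v, sq_nonneg (en (cloudProj v))]

variable {M : (VG × VH → ℝ) →ₗ[ℝ] (VG × VH → ℝ)}

lemma en_map_le_of_cloudBalanced {lam : ℝ}
    (hM1 : ∀ w, IsCloudBalanced w → en (M w) ≤ lam * en w)
    (hM2 : ∀ x : VG → ℝ, M (fun p => x p.1) = fun p => x p.1) (v : VG × VH → ℝ) :
    en (M v) ≤ en (cloudProj v) + lam * en (v - cloudProj v) := by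
  have hMs : M (cloudProj v) = cloudProj v := hM2 _
  calc en (M v) = en (cloudProj v + M (v - cloudProj v)) := by
        rw [map_sub, hMs, add_sub_cancel]
    _ ≤ _ := (en_add_le _ _).trans (add_le_add le_rfl (hM1 _ (isCloudBalanced_sub_cloudProj v)))

lemma ip_zigzag_eq (Gt : (VG × VH → ℝ) →ₗ[ℝ] (VG × VH → ℝ))
    (hM2 : ∀ x : VG → ℝ, M (fun p => x p.1) = fun p => x p.1) (hMn : ∀ f, en (M f) ≤ en f)
    (v : VG × VH → ℝ) :
    ip v (M (Gt (M v))) = ip (cloudProj v) (Gt (cloudProj v)) +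
      ip (cloudProj v) (Gt (M (v - cloudProj v))) +
      ip (v - cloudProj v) (M (Gt (M v) - cloudProj (Gt (M v)))) := by
  set s := cloudProj v
  set z := Gt (M v)
  have hMs : M s = s := hM2 _
  have hMz : M (cloudProj z) = cloudProj z := hM2 _
  have hsz : ip s (M z) = ip s (Gt s) + ip s (Gt (M (v - s))) := by
    rw [ip_map_eq_of_en_map_le M hMn hMs, ← ip_add_right, ← map_add, map_sub, hMs,
      add_sub_cancel]
  have htz : ip (v - s) (M z) = ip (v - s) (M (z - cloudProj z)) := calc
    ip (v - s) (M z) = ip (v - s) (cloudProj z + M (z - cloudProj z)) := by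
      rw [map_sub, hMz, add_sub_cancel]
    _ = ip (v - s) (M (z - cloudProj z)) := by
      rw [ip_add_right, ip_comm (v - s),
        ip_cloudProj_eq_zero z (isCloudBalanced_sub_cloudProj v), zero_add]
  rw [← hsz, ← htz, ← ip_add_left, add_sub_cancel]

end Clouds

/-- `M` models `I ⊗ A_H` and `Gt` the permutation operator `G̃` of the zig-zag product;
`hM1`, `hM2`, `hMn` say that `H` is a `λ₂`-expander and `hG3` that `G` is a `λ₁`-expander. -/
theorem stmt_14 {VG VH : Type*} [Fintype VG] [Fintype VH] (lam1 lam2 : ℝ)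
    (h1 : 0 ≤ lam1) (h12 : lam1 ≤ lam2) (h2 : lam2 ≤ 1)
    (M Gt : (VG × VH → ℝ) →ₗ[ℝ] (VG × VH → ℝ))
    (hM1 : ∀ w : VG × VH → ℝ, (∀ a : VG, ∑ h, w (a, h) = 0) →
      en (M w) ≤ lam2 * en w)
    (hM2 : ∀ x : VG → ℝ, M (fun p => x p.1) = fun p => x p.1)
    (hMn : ∀ f, en (M f) ≤ en f)
    (hGt : ∀ f, en (Gt f) = en f)
    (hG3 : ∀ x : VG → ℝ, (∑ a, x a) = 0 →
      |ip (fun p : VG × VH => x p.1) (Gt fun p => x p.1)| ≤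
        lam1 * en (fun p : VG × VH => x p.1) ^ 2)
    (v : VG × VH → ℝ) (hv : ip v (fun _ => 1) = 0) :
    |ip v (M (Gt (M v)))| ≤ 2 * lam2 * en v ^ 2 := by
  have hlam2 : 0 ≤ lam2 := h1.trans h12
  set s := cloudProj v
  set t := v - s
  set z := Gt (M v)
  have hMt : en (M t) ≤ lam2 * en t := hM1 t (isCloudBalanced_sub_cloudProj v)
  have hss : |ip s (Gt s)| ≤ lam1 * en s ^ 2 := hG3 _ (sum_cloudMean_eq_zero hv)
  have hst : |ip s (Gt (M t))| ≤ en s * (lam2 * en t) :=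
    (abs_ip_le _ _).trans (by rw [hGt]; exact mul_le_mul_of_nonneg_left hMt (en_nonneg s))
  have hz : en (z - cloudProj z) ≤ en s + lam2 * en t :=
    (en_sub_cloudProj_le z).trans (by rw [hGt]; exact en_map_le_of_cloudBalanced hM1 hM2 v)
  have htz : |ip t (M (z - cloudProj z))| ≤ en t * (lam2 * (en s + lam2 * en t)) :=
    (abs_ip_le _ _).trans <| mul_le_mul_of_nonneg_left
      ((hM1 _ (isCloudBalanced_sub_cloudProj z)).trans (mul_le_mul_of_nonneg_left hz hlam2))
      (en_nonneg t)
  calc |ip v (M z)|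
      ≤ |ip s (Gt s)| + |ip s (Gt (M t))| + |ip t (M (z - cloudProj z))| :=
        ip_zigzag_eq Gt hM2 hMn v ▸ abs_add_three _ _ _
    _ ≤ lam1 * en s ^ 2 + 2 * lam2 * en s * en t + lam2 ^ 2 * en t ^ 2 := by linarith
    _ ≤ 2 * lam2 * (en s ^ 2 + en t ^ 2) := zigzag_quadratic_le _ _ h12 hlam2 h2
    _ = 2 * lam2 * en v ^ 2 := by rw [en_sq_eq_cloudProj_add v]
end

section
/- Let λ_2 ∈ (0,1), s ≥ 6 an integer, and t ≥ s+1 an integer with t−1 ≥ s²; write σ = λ_2² and suppose 3(s−1)²σ^{s−4} ≤ σ^{s−5} (i.e., σ ≤ 1/(3(s−1)²)). Then (σ^{s-1} + (s−1)σ^{s-2} + (s−1)²σ^{s-4})^{⌊(t-1)/s⌋} ≤ σ^{(1 − 5/s)(1 − s/(t-1))(t-1)}. -/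
/-! Each of the three terms of the trinomial is at most `(s-1)²σ^(s-4)`, so by hypothesis the
trinomial is at most `σ^(s-5)`, and the `⌊(t-1)/s⌋`-th power is at most `σ^((s-5)⌊(t-1)/s⌋)`.
Since `σ ≤ 1`, it remains to bound the real exponent by the natural one: from
`t - 1 - s < s⌊(t-1)/s⌋` we get `(1 - 5/s)(1 - s/(t-1))(t-1) = (s-5)(t-1-s)/s ≤ (s-5)⌊(t-1)/s⌋`. -/

lemma add_mul_add_sq_mul_le_three_mul {σ a : ℝ} (hσ0 : 0 ≤ σ) (hσ1 : σ ≤ 1) (ha : 1 ≤ a)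
    {p q m : ℕ} (hp : m ≤ p) (hq : m ≤ q) :
    σ ^ p + a * σ ^ q + a ^ 2 * σ ^ m ≤ 3 * a ^ 2 * σ ^ m := by
  have hpm : σ ^ p ≤ σ ^ m := pow_le_pow_of_le_one hσ0 hσ1 hp
  have hqm : σ ^ q ≤ σ ^ m := pow_le_pow_of_le_one hσ0 hσ1 hq
  have ha2 : a ≤ a ^ 2 := by nlinarith
  have hm : 0 ≤ σ ^ m := pow_nonneg hσ0 m
  nlinarith

lemma Nat.cast_sub_le_mul_div (n s : ℕ) (hs : 0 < s) : (n : ℝ) - s ≤ s * (n / s : ℕ) := by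
  have h : n < n / s * s + s := Nat.lt_div_mul_add hs
  have h' : (n : ℝ) < (n / s : ℕ) * s + s := by exact_mod_cast h
  linarith

lemma one_sub_div_mul_one_sub_div_mul_le {r s n : ℕ} (hrs : r ≤ s) (hs : 0 < s) (hn : 0 < n) :
    (1 - r / (s : ℝ)) * (1 - s / (n : ℝ)) * n ≤ ((s - r) * (n / s) : ℕ) := by
  have hs' : (0 : ℝ) < s := by exact_mod_cast hs
  have hn' : (0 : ℝ) < n := by exact_mod_cast hn
  have hcoef : 0 ≤ ((s : ℝ) - r) / s := div_nonneg (by simp [hrs]) hs'.le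
  calc (1 - r / (s : ℝ)) * (1 - s / (n : ℝ)) * n = ((s : ℝ) - r) / s * (n - s) := by
        field_simp
    _ ≤ ((s : ℝ) - r) / s * (s * (n / s : ℕ)) :=
        mul_le_mul_of_nonneg_left (Nat.cast_sub_le_mul_div n s hs) hcoef
    _ = ((s - r) * (n / s) : ℕ) := by
        push_cast [hrs]
        field_simp

theorem stmt_17_general (lam2 : ℝ) (hl0 : 0 < lam2) (hl1 : lam2 < 1)
    (s t : ℕ) (hs : 6 ≤ s) (ht : s + 1 ≤ t)
    (h3 : 3 * ((s : ℝ) - 1) ^ 2 * (lam2 ^ 2) ^ (s - 4) ≤ (lam2 ^ 2) ^ (s - 5)) :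
    ((lam2 ^ 2) ^ (s - 1) + ((s : ℝ) - 1) * (lam2 ^ 2) ^ (s - 2) +
        ((s : ℝ) - 1) ^ 2 * (lam2 ^ 2) ^ (s - 4)) ^ ((t - 1) / s)
      ≤ (lam2 ^ 2) ^
          ((1 - 5 / (s : ℝ)) * (1 - (s : ℝ) / ((t : ℝ) - 1)) * ((t : ℝ) - 1)) := by
  set σ : ℝ := lam2 ^ 2
  have hσ0 : 0 < σ := by positivity
  have hσ1 : σ ≤ 1 := pow_le_one₀ hl0.le hl1.le
  have hs1 : (1 : ℝ) ≤ s - 1 := by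
    have : (6 : ℝ) ≤ s := by exact_mod_cast hs
    linarith
  have htri : σ ^ (s - 1) + ((s : ℝ) - 1) * σ ^ (s - 2) + ((s : ℝ) - 1) ^ 2 * σ ^ (s - 4)
      ≤ σ ^ (s - 5) :=
    (add_mul_add_sq_mul_le_three_mul hσ0.le hσ1 hs1 (by omega) (by omega)).trans h3
  have hexp := one_sub_div_mul_one_sub_div_mul_le (r := 5) (s := s) (n := t - 1) (by omega)
    (by omega) (by omega)
  rw [Nat.cast_sub (by omega : 1 ≤ t), Nat.cast_one, Nat.cast_ofNat] at hexp
  calc _ ≤ (σ ^ (s - 5)) ^ ((t - 1) / s) := pow_le_pow_left₀ (by positivity) htri _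
    _ = σ ^ (((s - 5) * ((t - 1) / s) : ℕ) : ℝ) := by rw [Real.rpow_natCast, pow_mul]
    _ ≤ _ := Real.rpow_le_rpow_of_exponent_ge hσ0 hσ1 hexp

/-- Final-bias computation in Ta-Shma's construction: with `σ = λ₂²`, `s ≥ 6`,
`t - 1 ≥ s²`, and `3(s-1)²σ^(s-4) ≤ σ^(s-5)`, the per-block norm bound raised to the
number `⌊(t-1)/s⌋` of blocks is at most `σ^((1 - 5/s)(1 - s/(t-1))(t-1))`. -/
theorem stmt_17 (lam2 : ℝ) (hl0 : 0 < lam2) (hl1 : lam2 < 1)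
    (s t : ℕ) (hs : 6 ≤ s) (ht : s + 1 ≤ t) (hts : s ^ 2 ≤ t - 1)
    (h3 : 3 * ((s : ℝ) - 1) ^ 2 * (lam2 ^ 2) ^ (s - 4) ≤ (lam2 ^ 2) ^ (s - 5)) :
    ((lam2 ^ 2) ^ (s - 1) + ((s : ℝ) - 1) * (lam2 ^ 2) ^ (s - 2) +
        ((s : ℝ) - 1) ^ 2 * (lam2 ^ 2) ^ (s - 4)) ^ ((t - 1) / s)
      ≤ (lam2 ^ 2) ^
          ((1 - 5 / (s : ℝ)) * (1 - (s : ℝ) / ((t : ℝ) - 1)) * ((t : ℝ) - 1)) :=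
  stmt_17_general lam2 hl0 hl1 s t hs ht h3
end

section
/- Let C ⊆ F_2^n be an ε_0-balanced linear code and W(t) the collection of all length-(t−1) walks on a regular graph G with σ_2(G) ≤ λ. Then the direct sum lifting C' = dsum_{W(t)}(C) is ε-balanced for ε = (ε_0 + 2λ)^{⌊(t-1)/2⌋}; that is, for every nonzero z ∈ C, |E_{w ∈ W(t)} (-1)^{z_{w_1}+⋯+z_{w_t}}| ≤ (ε_0 + 2λ)^{⌊(t-1)/2⌋}. -/
open scoped Classical
open Finset
noncomputable section
variable {n : ℕ}
def Aop (G : SimpleGraph (Fin n)) [DecidableRel G.Adj] (d : ℕ) (f : EuclideanSpace ℝ (Fin n)) :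
    EuclideanSpace ℝ (Fin n) :=
  WithLp.toLp 2 (fun v => (∑ u, if G.Adj v u then f u else 0) / d)
def Mop (χ : Fin n → ℝ) (f : EuclideanSpace ℝ (Fin n)) : EuclideanSpace ℝ (Fin n) :=
  WithLp.toLp 2 (fun v => χ v * f v)
def constE (n : ℕ) (c : ℝ) : EuclideanSpace ℝ (Fin n) := WithLp.toLp 2 (fun _ => c)

lemma norm_eq_sqrt (f : EuclideanSpace ℝ (Fin n)) : ‖f‖ = Real.sqrt (∑ v, f v ^ 2) := by
  rw [EuclideanSpace.norm_eq]
  congr 1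
  exact Finset.sum_congr rfl fun v _ => by rw [Real.norm_eq_abs, sq_abs]

lemma norm_const (c : ℝ) : ‖constE n c‖ = |c| * Real.sqrt n := by
  rw [norm_eq_sqrt]
  have : (∑ _v : Fin n, (constE n c) _v ^ 2) = n * c ^ 2 := by simp [constE, PiLp.toLp_apply, mul_comm]
  rw [this, Real.sqrt_mul (by positivity), Real.sqrt_sq_eq_abs, mul_comm]

lemma norm_Mop (χ : Fin n → ℝ) (hχ : ∀ v, χ v = 1 ∨ χ v = -1) (f : EuclideanSpace ℝ (Fin n)) :
    ‖Mop χ f‖ = ‖f‖ := by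
  rw [norm_eq_sqrt, norm_eq_sqrt]
  congr 1
  refine Finset.sum_congr rfl fun v _ => ?_
  rcases hχ v with h | h <;> simp [Mop, PiLp.toLp_apply, h, mul_pow]

lemma Mop_add (χ : Fin n → ℝ) (f g : EuclideanSpace ℝ (Fin n)) :
    Mop χ (f + g) = Mop χ f + Mop χ g := by
  ext v; simp only [Mop, PiLp.add_apply, PiLp.toLp_apply]; ring

lemma Mop_smul (χ : Fin n → ℝ) (c : ℝ) (f : EuclideanSpace ℝ (Fin n)) :
    Mop χ (c • f) = c • Mop χ f := by
  ext v; simp only [Mop, PiLp.smul_apply, PiLp.toLp_apply, smul_eq_mul]; ring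

lemma perp_norm_le (f : EuclideanSpace ℝ (Fin n)) (c : ℝ) (hf : ∑ v, f v = 0) :
    ‖f‖ ≤ ‖f + c • constE n 1‖ := by
  rw [norm_eq_sqrt, norm_eq_sqrt]
  apply Real.sqrt_le_sqrt
  have h1 : ∀ v, (f + c • constE n 1) v ^ 2 = f v ^ 2 + 2 * c * f v + c ^ 2 := by
    intro v
    have : (f + c • constE n 1) v = f v + c := by
      simp [PiLp.add_apply, PiLp.smul_apply, constE, PiLp.toLp_apply]
    rw [this]; ring
  rw [Finset.sum_congr rfl fun v _ => h1 v]
  rw [Finset.sum_add_distrib, Finset.sum_add_distrib, ← Finset.mul_sum, hf, Finset.sum_const]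
  have : (0:ℝ) ≤ (univ : Finset (Fin n)).card • (c^2 : ℝ) := by positivity
  linarith

lemma abs_sum_le_sqrt_mul_norm (f : EuclideanSpace ℝ (Fin n)) :
    |∑ v, f v| ≤ Real.sqrt n * ‖f‖ := by
  have h := abs_real_inner_le_norm (constE n 1) f
  have h2 : (inner ℝ (constE n 1) f : ℝ) = ∑ v, f v := by
    simp [PiLp.inner_apply, RCLike.inner_apply, constE]
  rw [h2, norm_const, abs_one, one_mul] at h
  exact h

variable (G : SimpleGraph (Fin n)) [DecidableRel G.Adj] {d : ℕ}

lemma filter_adj (v : Fin n) : univ.filter (G.Adj v ·) = G.neighborFinset v := by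
  rw [SimpleGraph.neighborFinset_eq_filter]

lemma sum_adj (f : Fin n → ℝ) (v : Fin n) :
    (∑ u, if G.Adj v u then f u else 0) = ∑ u ∈ G.neighborFinset v, f u := by
  rw [← filter_adj, Finset.sum_filter]

lemma Aop_add (f g : EuclideanSpace ℝ (Fin n)) : Aop G d (f + g) = Aop G d f + Aop G d g := by
  ext v
  simp only [Aop, PiLp.add_apply, PiLp.toLp_apply]
  rw [show ∀ a b : ℝ, a / d + b / d = (a + b) / d from fun a b => by ring]
  congr 1
  rw [← Finset.sum_add_distrib]
  exact Finset.sum_congr rfl fun u _ => by split_ifs <;> simp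

lemma Aop_smul (c : ℝ) (f : EuclideanSpace ℝ (Fin n)) : Aop G d (c • f) = c • Aop G d f := by
  ext v
  simp only [Aop, PiLp.smul_apply, PiLp.toLp_apply, smul_eq_mul]
  rw [show ∀ a : ℝ, c * (a / d) = (c * a) / d from fun a => by ring]
  congr 1
  rw [Finset.mul_sum]
  exact Finset.sum_congr rfl fun u _ => by split_ifs <;> simp

lemma Aop_const (hreg : G.IsRegularOfDegree d) (hd : 0 < d) (c : ℝ) :
    Aop G d (constE n c) = constE n c := by
  ext v
  simp only [Aop, constE, PiLp.toLp_apply, sum_adj, Finset.sum_const, nsmul_eq_mul]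
  rw [show (G.neighborFinset v).card = d from hreg v]
  field_simp

lemma norm_Aop_le (hreg : G.IsRegularOfDegree d) (hd : 0 < d) (f : EuclideanSpace ℝ (Fin n)) :
    ‖Aop G d f‖ ≤ ‖f‖ := by
  rw [norm_eq_sqrt, norm_eq_sqrt]
  apply Real.sqrt_le_sqrt
  have key : ∀ v, (Aop G d f v) ^ 2 ≤ (∑ u ∈ G.neighborFinset v, f u ^ 2) / d := by
    intro v
    have h1 : Aop G d f v = (∑ u ∈ G.neighborFinset v, f u) / d := by
      simp only [Aop, PiLp.toLp_apply, sum_adj]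
    have hcs := sq_sum_le_card_mul_sum_sq (s := G.neighborFinset v) (f := fun u => f u)
    rw [show (G.neighborFinset v).card = d from hreg v] at hcs
    rw [h1, div_pow]
    calc (∑ u ∈ G.neighborFinset v, f u) ^ 2 / (d:ℝ)^2
        ≤ ((d:ℝ) * ∑ u ∈ G.neighborFinset v, f u ^ 2) / (d:ℝ)^2 := by
          gcongr

      _ = (∑ u ∈ G.neighborFinset v, f u ^ 2) / d := by
          field_simp
  calc ∑ v, (Aop G d f v) ^ 2 ≤ ∑ v, (∑ u ∈ G.neighborFinset v, f u ^ 2) / d :=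
        Finset.sum_le_sum fun v _ => key v
    _ = (∑ v, ∑ u, if G.Adj v u then f u ^ 2 else 0) / d := by
        rw [← Finset.sum_div]
        congr 1
        exact Finset.sum_congr rfl fun v _ => (sum_adj G _ v).symm
    _ = (∑ u, ∑ v, if G.Adj v u then f u ^ 2 else 0) / d := by rw [Finset.sum_comm]
    _ = ∑ v, f v ^ 2 := by
        rw [div_eq_iff (by positivity : (d:ℝ) ≠ 0), Finset.sum_mul]
        refine Finset.sum_congr rfl fun u _ => ?_
        have : ∀ v, (if G.Adj v u then f u ^ 2 else 0) = (if G.Adj u v then f u ^ 2 else 0) :=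
          fun v => if_congr (G.adj_comm v u) rfl rfl
        rw [Finset.sum_congr rfl fun v _ => this v, sum_adj G (fun _ => f u ^ 2) u,
          Finset.sum_const, show (G.neighborFinset u).card = d from hreg u]
        simp [mul_comm]

lemma norm_Aop_le_lam {lam : ℝ}
    (hσ : ∀ f : Fin n → ℝ, (∑ i, f i) = 0 →
      Real.sqrt (∑ v, ((∑ u, if G.Adj v u then f u else 0) / d) ^ 2) ≤
        lam * Real.sqrt (∑ i, f i ^ 2))
    (f : EuclideanSpace ℝ (Fin n)) (hf : (∑ i, f i) = 0) :
    ‖Aop G d f‖ ≤ lam * ‖f‖ := by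
  rw [norm_eq_sqrt, norm_eq_sqrt]
  exact hσ f hf


lemma key_bound (hreg : G.IsRegularOfDegree d) (hd : 0 < d) (hn : 0 < n)
    {lam ε₀ : ℝ} (hlam : 0 ≤ lam)
    (hσ : ∀ f : Fin n → ℝ, (∑ i, f i) = 0 →
      Real.sqrt (∑ v, ((∑ u, if G.Adj v u then f u else 0) / d) ^ 2) ≤
        lam * Real.sqrt (∑ i, f i ^ 2))
    (χ : Fin n → ℝ) (hχ : ∀ v, χ v = 1 ∨ χ v = -1)
    (hbias : |∑ v, χ v| ≤ ε₀ * n)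
    (f : EuclideanSpace ℝ (Fin n)) :
    ‖Aop G d (Mop χ (Aop G d (Mop χ f)))‖ ≤ (ε₀ + 2 * lam) * ‖f‖ := by
  have hnR : (0:ℝ) < n := by exact_mod_cast hn
  have hsn : (0:ℝ) < Real.sqrt n := Real.sqrt_pos.mpr hnR
  set g : EuclideanSpace ℝ (Fin n) := Mop χ f with hg
  have hgn : ‖g‖ = ‖f‖ := norm_Mop χ hχ f
  set μ : ℝ := (∑ v, g v) / n with hμ
  set g1 : EuclideanSpace ℝ (Fin n) := g - μ • constE n 1 with hg1
  have hg1sum : ∑ v, g1 v = 0 := by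
    have : ∀ v, g1 v = g v - μ := by
      intro v; simp [hg1, PiLp.sub_apply, PiLp.smul_apply, constE]
    rw [Finset.sum_congr rfl fun v _ => this v, Finset.sum_sub_distrib, Finset.sum_const]
    simp only [card_univ, Fintype.card_fin, nsmul_eq_mul, hμ]
    field_simp
    ring
  have hgdecomp : g = g1 + μ • constE n 1 := by rw [hg1]; abel
  have hg1le : ‖g1‖ ≤ ‖f‖ := by
    rw [← hgn]
    calc ‖g1‖ ≤ ‖g1 + μ • constE n 1‖ := perp_norm_le g1 μ hg1sum
      _ = ‖g‖ := by rw [← hgdecomp]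
  -- decompose χ
  set xe : EuclideanSpace ℝ (Fin n) := WithLp.toLp 2 χ with hxe
  set b : ℝ := (∑ v, χ v) / n with hb
  set χ1 : EuclideanSpace ℝ (Fin n) := xe - b • constE n 1 with hχ1
  have hχ1sum : ∑ v, χ1 v = 0 := by
    have : ∀ v, χ1 v = χ v - b := by
      intro v; simp [hχ1, PiLp.sub_apply, PiLp.smul_apply, constE, hxe]
    rw [Finset.sum_congr rfl fun v _ => this v, Finset.sum_sub_distrib, Finset.sum_const]
    simp only [card_univ, Fintype.card_fin, nsmul_eq_mul, hb]
    field_simp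
    ring
  have hχdecomp : xe = χ1 + b • constE n 1 := by rw [hχ1]; abel
  have hxen : ‖xe‖ = Real.sqrt n := by
    rw [norm_eq_sqrt]
    congr 1
    rw [show ∑ v, xe v ^ 2 = ∑ _v : Fin n, (1:ℝ) from
      Finset.sum_congr rfl fun v _ => by rcases hχ v with h | h <;> simp [hxe, h]]
    simp
  have hχ1le : ‖χ1‖ ≤ Real.sqrt n := by
    rw [← hxen]
    calc ‖χ1‖ ≤ ‖χ1 + b • constE n 1‖ := perp_norm_le χ1 b hχ1sum
      _ = ‖xe‖ := by rw [← hχdecomp]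
  have hbabs : |b| ≤ ε₀ := by
    rw [hb, abs_div, abs_of_pos hnR, div_le_iff₀ hnR]
    linarith [hbias]
  have hμabs : |μ| * Real.sqrt n ≤ ‖f‖ := by
    have h1 : |∑ v, g v| ≤ Real.sqrt n * ‖g‖ := abs_sum_le_sqrt_mul_norm g
    rw [hμ, abs_div, abs_of_pos hnR]
    rw [div_mul_eq_mul_div, div_le_iff₀ hnR]
    calc |∑ v, g v| * Real.sqrt n ≤ (Real.sqrt n * ‖g‖) * Real.sqrt n := by
          apply mul_le_mul_of_nonneg_right h1 (le_of_lt hsn)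
      _ = ‖f‖ * n := by
          rw [hgn]; rw [mul_comm (Real.sqrt ↑n) (‖f‖), mul_assoc, Real.mul_self_sqrt hnR.le]
  -- structure of the vector
  have hMconst : Mop χ (constE n 1) = xe := by
    ext v; simp [Mop, constE, hxe]
  have hF : Aop G d (Mop χ (Aop G d g)) =
      (μ * b) • constE n 1 + (μ • Aop G d χ1 + Aop G d (Mop χ (Aop G d g1))) := by
    have h1 : Aop G d g = Aop G d g1 + μ • constE n 1 := by
      rw [hgdecomp, Aop_add, Aop_smul, Aop_const G hreg hd]
    have h2 : Mop χ (Aop G d g) = Mop χ (Aop G d g1) + μ • xe := by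
      rw [h1, Mop_add, Mop_smul, hMconst]
    rw [h2, Aop_add, Aop_smul, hχdecomp, Aop_add, Aop_smul, Aop_const G hreg hd]
    rw [smul_add, smul_smul]
    abel
  have hlam1 : ‖Aop G d g1‖ ≤ lam * ‖f‖ := by
    calc ‖Aop G d g1‖ ≤ lam * ‖g1‖ := norm_Aop_le_lam G hσ g1 hg1sum
      _ ≤ lam * ‖f‖ := mul_le_mul_of_nonneg_left hg1le hlam
  have hlamχ : ‖Aop G d χ1‖ ≤ lam * Real.sqrt n := by
    calc ‖Aop G d χ1‖ ≤ lam * ‖χ1‖ := norm_Aop_le_lam G hσ χ1 hχ1sum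
      _ ≤ lam * Real.sqrt n := mul_le_mul_of_nonneg_left hχ1le hlam
  calc ‖Aop G d (Mop χ (Aop G d g))‖
      ≤ ‖(μ * b) • constE n 1‖ + (‖μ • Aop G d χ1‖ + ‖Aop G d (Mop χ (Aop G d g1))‖) := by
        rw [hF]
        exact (norm_add_le _ _).trans (by gcongr; exact norm_add_le _ _)
    _ ≤ ε₀ * ‖f‖ + (lam * ‖f‖ + lam * ‖f‖) := by
        gcongr ?_ + (?_ + ?_)
        · rw [norm_smul, Real.norm_eq_abs, norm_const, abs_one, one_mul, abs_mul]
          calc |μ| * |b| * Real.sqrt n = |b| * (|μ| * Real.sqrt n) := by ring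
            _ ≤ ε₀ * ‖f‖ := by
                apply mul_le_mul hbabs hμabs (by positivity) ((abs_nonneg b).trans hbabs)
        · rw [norm_smul, Real.norm_eq_abs]
          calc |μ| * ‖Aop G d χ1‖ ≤ |μ| * (lam * Real.sqrt n) := by
                apply mul_le_mul_of_nonneg_left hlamχ (abs_nonneg μ)
            _ = lam * (|μ| * Real.sqrt n) := by ring
            _ ≤ lam * ‖f‖ := mul_le_mul_of_nonneg_left hμabs hlam
        · calc ‖Aop G d (Mop χ (Aop G d g1))‖ ≤ ‖Mop χ (Aop G d g1)‖ :=
                norm_Aop_le G hreg hd _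
              _ = ‖Aop G d g1‖ := norm_Mop χ hχ _
              _ ≤ lam * ‖f‖ := hlam1
    _ = (ε₀ + 2 * lam) * ‖f‖ := by ring


def Uvec (G : SimpleGraph (Fin n)) [DecidableRel G.Adj] (d : ℕ) (χ : Fin n → ℝ) :
    ℕ → EuclideanSpace ℝ (Fin n)
  | 0 => WithLp.toLp 2 χ
  | s+1 => Mop χ (Aop G d (Uvec G d χ s))

lemma Mop_Mop (χ : Fin n → ℝ) (hχ : ∀ v, χ v = 1 ∨ χ v = -1) (f : EuclideanSpace ℝ (Fin n)) :
    Mop χ (Mop χ f) = f := by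
  ext v
  rcases hχ v with h | h <;> simp [Mop, h]

def toE (χ : Fin n → ℝ) : EuclideanSpace ℝ (Fin n) := WithLp.toLp 2 χ

lemma norm_pm (χ : Fin n → ℝ) (hχ : ∀ v, χ v = 1 ∨ χ v = -1) :
    ‖toE χ‖ = Real.sqrt n := by
  rw [norm_eq_sqrt]
  congr 1
  rw [show ∑ v, toE χ v ^ 2 = ∑ _v : Fin n, (1:ℝ) from
    Finset.sum_congr rfl fun v _ => by rcases hχ v with h | h <;> simp [toE, h]]
  simp

lemma Uvec_norm (hreg : G.IsRegularOfDegree d) (hd : 0 < d) (hn : 0 < n)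
    {lam ε₀ : ℝ} (hlam : 0 ≤ lam) (heps : 0 ≤ ε₀ + 2 * lam)
    (hσ : ∀ f : Fin n → ℝ, (∑ i, f i) = 0 →
      Real.sqrt (∑ v, ((∑ u, if G.Adj v u then f u else 0) / d) ^ 2) ≤
        lam * Real.sqrt (∑ i, f i ^ 2))
    (χ : Fin n → ℝ) (hχ : ∀ v, χ v = 1 ∨ χ v = -1)
    (hbias : |∑ v, χ v| ≤ ε₀ * n) :
    ∀ s, ‖Uvec G d χ s‖ ≤ (ε₀ + 2 * lam) ^ (s / 2) * Real.sqrt n := by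
  intro s
  induction s using Nat.strong_induction_on with
  | _ s ih =>
    rcases s with _ | (_ | s)
    · simpa [Uvec, toE] using le_of_eq (norm_pm χ hχ)
    · have h1 : ‖Uvec G d χ 1‖ = ‖Aop G d (toE χ)‖ := norm_Mop χ hχ _
      rw [h1]
      calc ‖Aop G d (toE χ)‖ ≤ ‖toE χ‖ := norm_Aop_le G hreg hd _
        _ = Real.sqrt n := norm_pm χ hχ
        _ = (ε₀ + 2 * lam) ^ (1 / 2) * Real.sqrt n := by norm_num
    · have h2 : Uvec G d χ (s+2) = Mop χ (Aop G d (Mop χ (Aop G d (Uvec G d χ s)))) := rfl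
      have h3 : ‖Uvec G d χ (s+2)‖ = ‖Aop G d (Mop χ (Aop G d (Uvec G d χ s)))‖ := by
        rw [h2]; exact norm_Mop χ hχ _
      have hk := key_bound G hreg hd hn hlam hσ χ hχ hbias (Mop χ (Uvec G d χ s))
      rw [Mop_Mop χ hχ] at hk
      rw [norm_Mop χ hχ] at hk
      have hih := ih s (by omega)
      calc ‖Uvec G d χ (s+2)‖ = ‖Aop G d (Mop χ (Aop G d (Uvec G d χ s)))‖ := h3
        _ ≤ (ε₀ + 2 * lam) * ‖Uvec G d χ s‖ := hk
        _ ≤ (ε₀ + 2 * lam) * ((ε₀ + 2 * lam) ^ (s / 2) * Real.sqrt n) :=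
            mul_le_mul_of_nonneg_left hih heps
        _ = (ε₀ + 2 * lam) ^ ((s+2) / 2) * Real.sqrt n := by
            rw [show (s+2)/2 = s/2 + 1 from by omega, pow_succ]
            ring


def Wvec (G : SimpleGraph (Fin n)) [DecidableRel G.Adj] (χ : Fin n → ℝ) :
    ℕ → (Fin n → ℝ)
  | 0 => χ
  | s+1 => fun v => χ v * ∑ u, if G.Adj v u then Wvec G χ s u else 0

lemma Wvec_eq (hd : 0 < d) (χ : Fin n → ℝ) :
    ∀ s, Wvec G χ s = fun v => (d:ℝ) ^ s * Uvec G d χ s v := by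
  intro s
  induction s with
  | zero => funext v; simp [Wvec, Uvec, toE]
  | succ s ih =>
    funext v
    have hdR : (d:ℝ) ≠ 0 := by positivity
    calc Wvec G χ (s+1) v = χ v * ∑ u, if G.Adj v u then Wvec G χ s u else 0 := rfl
      _ = χ v * ∑ u, if G.Adj v u then (d:ℝ) ^ s * Uvec G d χ s u else 0 := by rw [ih]
      _ = (d:ℝ) ^ s * (χ v * ∑ u, if G.Adj v u then Uvec G d χ s u else 0) := by
          rw [Finset.sum_congr rfl fun u _ =>
            (show (if G.Adj v u then (d:ℝ) ^ s * Uvec G d χ s u else 0)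
              = (d:ℝ)^s * (if G.Adj v u then Uvec G d χ s u else 0) from by
                split_ifs <;> simp), ← Finset.mul_sum]
          ring
      _ = (d:ℝ) ^ (s+1) * Uvec G d χ (s+1) v := by
          have : Uvec G d χ (s+1) v
              = χ v * ((∑ u, if G.Adj v u then Uvec G d χ s u else 0) / d) := rfl
          rw [this, pow_succ]
          field_simp

lemma cond_cons (s : ℕ) (a : Fin n) (w : Fin (s+1) → Fin n) :
    (∀ i : Fin (s+1), G.Adj ((Fin.cons a w : Fin (s+2) → Fin n) i.castSucc)
        ((Fin.cons a w : Fin (s+2) → Fin n) i.succ)) ↔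
      (G.Adj a (w 0) ∧ ∀ i : Fin s, G.Adj (w i.castSucc) (w i.succ)) := by
  rw [Fin.forall_fin_succ]
  constructor
  · rintro ⟨h0, hs⟩
    refine ⟨by simpa using h0, fun i => ?_⟩
    have := hs i
    rwa [← Fin.succ_castSucc, Fin.cons_succ, Fin.cons_succ] at this
  · rintro ⟨h0, hs⟩
    refine ⟨by simpa using h0, fun i => ?_⟩
    rw [← Fin.succ_castSucc, Fin.cons_succ, Fin.cons_succ]
    exact hs i

lemma walk_sum (χ : Fin n → ℝ) :
    ∀ (s : ℕ) (bv : Fin n),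
      (∑ v : Fin (s+1) → Fin n,
        if (∀ i : Fin s, G.Adj (v i.castSucc) (v i.succ)) ∧ v 0 = bv
          then ∏ i, χ (v i) else 0) = Wvec G χ s bv := by
  intro s
  induction s with
  | zero =>
    intro bv
    rw [← Equiv.sum_comp (Equiv.funUnique (Fin 1) (Fin n)).symm]
    simp [Wvec, Finset.sum_ite_eq', Equiv.funUnique]
  | succ s ih =>
    intro bv
    rw [← Equiv.sum_comp (Fin.consEquiv (fun _ => Fin n))]
    rw [Fintype.sum_prod_type]
    have hterm : ∀ (a : Fin n) (w : Fin (s+1) → Fin n),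
        (if (∀ i : Fin (s+1),
              G.Adj ((Fin.consEquiv (fun _ => Fin n)) (a, w) i.castSucc)
                ((Fin.consEquiv (fun _ => Fin n)) (a, w) i.succ)) ∧
            (Fin.consEquiv (fun _ => Fin n)) (a, w) 0 = bv
          then ∏ i, χ ((Fin.consEquiv (fun _ => Fin n)) (a, w) i) else 0)
        = (if a = bv then
            (if G.Adj a (w 0) ∧ (∀ i : Fin s, G.Adj (w i.castSucc) (w i.succ))
              then χ a * ∏ i, χ (w i) else 0) else 0) := by
      intro a w
      have he : ((Fin.consEquiv (fun _ => Fin n)) (a, w) : Fin (s+2) → Fin n) = Fin.cons a w := rfl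
      rw [he]
      have hprod : (∏ i, χ ((Fin.cons a w : Fin (s+2) → Fin n) i)) = χ a * ∏ i, χ (w i) := by
        rw [Fin.prod_univ_succ]
        simp [Fin.cons_succ]
      rw [hprod]
      by_cases h1 : a = bv
      · by_cases h2 : G.Adj a (w 0) ∧ (∀ i : Fin s, G.Adj (w i.castSucc) (w i.succ))
        · rw [if_pos h1, if_pos h2, if_pos]
          refine ⟨(cond_cons G s a w).mpr h2, by simp [h1]⟩
        · rw [if_pos h1, if_neg h2, if_neg]
          rintro ⟨hc, -⟩
          exact h2 ((cond_cons G s a w).mp hc)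
      · rw [if_neg h1, if_neg]
        rintro ⟨-, hc⟩
        exact h1 (by simpa using hc)
    rw [Finset.sum_congr rfl fun a _ => Finset.sum_congr rfl fun w _ => hterm a w]
    rw [Finset.sum_comm]
    rw [Finset.sum_congr rfl fun w _ => Finset.sum_ite_eq' univ bv _]
    simp only [mem_univ, if_true]
    -- now: ∑ w, if G.Adj bv (w 0) ∧ cond' w then χ bv * ∏ χ (w i) else 0 = Wvec G χ (s+1) bv
    have hins : ∀ (w : Fin (s+1) → Fin n),
        (if G.Adj bv (w 0) ∧ (∀ i : Fin s, G.Adj (w i.castSucc) (w i.succ))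
          then χ bv * ∏ i, χ (w i) else 0)
        = ∑ u, if G.Adj bv u
            then (if (∀ i : Fin s, G.Adj (w i.castSucc) (w i.succ)) ∧ w 0 = u
              then χ bv * ∏ i, χ (w i) else 0) else 0 := by
      intro w
      rw [Finset.sum_eq_single (w 0)]
      · by_cases h1 : G.Adj bv (w 0) <;> by_cases h2 : (∀ i : Fin s, G.Adj (w i.castSucc) (w i.succ))
        · simp [h1, h2]
        · simp [h1, h2]
        · simp [h1, h2]
        · simp [h1, h2]
      · intro u _ hu
        split_ifs with h1 h2
        · exact absurd h2.2.symm hu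
        · rfl
        · rfl
      · intro h; exact absurd (mem_univ _) h
    rw [Finset.sum_congr rfl fun w _ => hins w]
    rw [Finset.sum_comm]
    have hcol : ∀ u : Fin n,
        (∑ w : Fin (s+1) → Fin n, if G.Adj bv u
            then (if (∀ i : Fin s, G.Adj (w i.castSucc) (w i.succ)) ∧ w 0 = u
              then χ bv * ∏ i, χ (w i) else 0) else 0)
        = if G.Adj bv u then χ bv * Wvec G χ s u else 0 := by
      intro u
      by_cases h1 : G.Adj bv u
      · simp only [h1, if_true]
        rw [← ih u, Finset.mul_sum]
        refine Finset.sum_congr rfl fun w _ => ?_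
        split_ifs <;> simp
      · simp [h1]
    rw [Finset.sum_congr rfl fun u _ => hcol u]
    have : Wvec G χ (s+1) bv = χ bv * ∑ u, if G.Adj bv u then Wvec G χ s u else 0 := rfl
    rw [this, Finset.mul_sum]
    refine Finset.sum_congr rfl fun u _ => ?_
    split_ifs <;> simp

lemma walk_total (χ : Fin n → ℝ) (s : ℕ) :
    (∑ v : Fin (s+1) → Fin n,
        if (∀ i : Fin s, G.Adj (v i.castSucc) (v i.succ)) then ∏ i, χ (v i) else 0)
      = ∑ bv, Wvec G χ s bv := by
  rw [Finset.sum_congr rfl (fun bv _ => (walk_sum G χ s bv).symm), Finset.sum_comm]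
  refine Finset.sum_congr rfl fun v _ => ?_
  by_cases hc : (∀ i : Fin s, G.Adj (v i.castSucc) (v i.succ))
  · have h1 : ∀ x : Fin n,
        (if (∀ i : Fin s, G.Adj (v i.castSucc) (v i.succ)) ∧ v 0 = x
          then ∏ i, χ (v i) else 0) = (if v 0 = x then ∏ i, χ (v i) else 0) :=
      fun x => if_congr (and_iff_right hc) rfl rfl
    rw [if_pos hc, Finset.sum_congr rfl fun x _ => h1 x,
      Finset.sum_ite_eq univ (v 0) (fun _ => ∏ i, χ (v i))]
    simp
  · simp [hc]


lemma neg_one_pow_mod_two' (k : ℕ) : ((-1:ℝ)) ^ (k % 2) = (-1) ^ k := by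
  conv_rhs => rw [← Nat.div_add_mod k 2]
  rw [pow_add, pow_mul]
  norm_num

lemma neg_one_pow_add' (a b : ZMod 2) :
    ((-1:ℝ)) ^ ((a + b).val) = (-1) ^ a.val * (-1) ^ b.val := by
  rw [ZMod.val_add, neg_one_pow_mod_two', pow_add]

lemma neg_one_pow_sum (m : ℕ) (g : Fin m → ZMod 2) :
    ((-1:ℝ)) ^ ((∑ i, g i).val) = ∏ i, (-1:ℝ) ^ ((g i).val) := by
  induction m with
  | zero => simp
  | succ m ih =>
    rw [Fin.sum_univ_succ, Fin.prod_univ_succ, neg_one_pow_add', ih (fun i => g i.succ)]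


end

/-- Bias amplification by expander walks (Ta-Shma, after Rozenman–Wigderson): if
`C ⊆ F_2^n` is an `ε₀`-balanced linear code and `W(t)` is the collection of all walks with
`t` vertices on a `d`-regular graph `G` with `σ₂(G) ≤ λ` (expressed via the contraction of
the normalized adjacency operator on vectors orthogonal to the all-ones vector), then for
every nonzero `z ∈ C` the direct sum lifting along walks has bias at most
`(ε₀ + 2λ)^⌊(t-1)/2⌋`. -/
theorem stmt_19 (n d t : ℕ) (hn : 0 < n) (hd : 0 < d) (ht : 1 ≤ t)
    (ε₀ lam : ℝ)
    (G : SimpleGraph (Fin n)) [DecidableRel G.Adj] (hreg : G.IsRegularOfDegree d)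
    (hσ : ∀ f : Fin n → ℝ, (∑ i, f i) = 0 →
      Real.sqrt (∑ v, ((∑ u, if G.Adj v u then f u else 0) / d) ^ 2) ≤
        lam * Real.sqrt (∑ i, f i ^ 2))
    (C : Submodule (ZMod 2) (Fin n → ZMod 2))
    (hC : ∀ y ∈ C, y ≠ 0 → |(∑ i, (-1 : ℝ) ^ (y i).val) / n| ≤ ε₀)
    (z : Fin n → ZMod 2) (hz : z ∈ C) (hz0 : z ≠ 0) :
    |(∑ v : Fin t → Fin n,
        if ∀ i : Fin (t - 1),
            G.Adj (v ⟨i.1, by have := i.2; omega⟩) (v ⟨i.1 + 1, by have := i.2; omega⟩)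
          then (-1 : ℝ) ^ (∑ i, z (v i)).val else 0) / (n * d ^ (t - 1))|
      ≤ (ε₀ + 2 * lam) ^ ((t - 1) / 2) := by
  obtain ⟨s, rfl⟩ : ∃ s, t = s + 1 := ⟨t - 1, by omega⟩
  have hnR : (0:ℝ) < n := by exact_mod_cast hn
  set χ : Fin n → ℝ := fun v => (-1:ℝ) ^ ((z v).val) with hχdef
  have hχ : ∀ v, χ v = 1 ∨ χ v = -1 := by
    intro v
    have hv : (z v).val < 2 := ZMod.val_lt (z v)
    have hv2 : (z v).val = 0 ∨ (z v).val = 1 := by omega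
    rcases hv2 with h | h <;> simp [hχdef, h]
  have hbias : |∑ v, χ v| ≤ ε₀ * n := by
    have h := hC z hz hz0
    rw [abs_div, abs_of_pos hnR, div_le_iff₀ hnR] at h
    simpa [hχdef, mul_comm] using h
  have hε₀ : 0 ≤ ε₀ := by
    have h := hC z hz hz0
    exact (abs_nonneg _).trans h
  -- lam is nonnegative
  have hn2 : 2 ≤ n := by
    have h := G.degree_lt_card_verts ⟨0, hn⟩
    rw [hreg ⟨0, hn⟩, Fintype.card_fin] at h
    omega
  have hlam : 0 ≤ lam := by
    set a : Fin n := ⟨0, by omega⟩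
    set c : Fin n := ⟨1, by omega⟩
    have hac : a ≠ c := by simp [a, c, Fin.ext_iff]
    set f : Fin n → ℝ := fun i => (if i = a then (1:ℝ) else 0) - (if i = c then 1 else 0)
      with hfdef
    have hsum : ∑ i, f i = 0 := by
      simp [hfdef, Finset.sum_sub_distrib, Finset.sum_ite_eq']
    have hsq : ∑ i, f i ^ 2 = 2 := by
      have : ∀ i, f i ^ 2 = (if i = a then (1:ℝ) else 0) + (if i = c then 1 else 0) := by
        intro i
        by_cases h1 : i = a
        · have h2 : i ≠ c := by rw [h1]; exact hac
          simp [hfdef, h1, h2, hac, hac.symm]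
        · by_cases h2 : i = c <;> simp [hfdef, h1, h2, hac, hac.symm, Ne.symm hac]
      rw [Finset.sum_congr rfl fun i _ => this i, Finset.sum_add_distrib,
        Finset.sum_ite_eq', Finset.sum_ite_eq']
      norm_num
    have h := hσ f hsum
    rw [hsq] at h
    have h0 : (0:ℝ) ≤ lam * Real.sqrt 2 := (Real.sqrt_nonneg _).trans h
    nlinarith [Real.sq_sqrt (by norm_num : (2:ℝ) ≥ 0), Real.sqrt_nonneg 2]
  have heps : 0 ≤ ε₀ + 2 * lam := by linarith
  -- rewrite the walk sum
  have hrw : (∑ v : Fin (s+1) → Fin n,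
        if ∀ i : Fin (s + 1 - 1),
            G.Adj (v ⟨i.1, by have := i.2; omega⟩) (v ⟨i.1 + 1, by have := i.2; omega⟩)
          then (-1 : ℝ) ^ (∑ i, z (v i)).val else 0)
      = ∑ v : Fin (s+1) → Fin n,
          if (∀ i : Fin s, G.Adj (v i.castSucc) (v i.succ)) then ∏ i, χ (v i) else 0 := by
    refine Finset.sum_congr rfl fun v _ => ?_
    refine if_congr Iff.rfl ?_ rfl
    exact neg_one_pow_sum (s+1) (fun i => z (v i))
  rw [hrw, walk_total G χ s, Finset.sum_congr rfl fun bv _ => congrFun (Wvec_eq G hd χ s) bv,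
    ← Finset.mul_sum]
  have hds : (0:ℝ) < (d:ℝ) ^ s := by positivity
  have hcancel : ((d:ℝ) ^ s * ∑ bv, Uvec G d χ s bv) / (↑n * ↑d ^ (s + 1 - 1))
      = (∑ bv, Uvec G d χ s bv) / n := by
    rw [show s + 1 - 1 = s from rfl]
    field_simp
  rw [hcancel, show s + 1 - 1 = s from rfl]
  rw [abs_div, abs_of_pos hnR, div_le_iff₀ hnR]
  calc |∑ bv, Uvec G d χ s bv| ≤ Real.sqrt n * ‖Uvec G d χ s‖ :=
        abs_sum_le_sqrt_mul_norm _
    _ ≤ Real.sqrt n * ((ε₀ + 2 * lam) ^ (s / 2) * Real.sqrt n) := by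
        apply mul_le_mul_of_nonneg_left _ (Real.sqrt_nonneg _)
        exact Uvec_norm G hreg hd hn hlam heps hσ χ hχ hbias s
    _ = (ε₀ + 2 * lam) ^ (s / 2) * (Real.sqrt n * Real.sqrt n) := by ring
    _ = (ε₀ + 2 * lam) ^ (s / 2) * n := by rw [Real.mul_self_sqrt hnR.le]
end
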